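/- Let U be a finite set of pairwise distinct unit vectors in ℝ² with pos(U) = ℝ², and suppose u ∈ U_□. If {u, x, y, z} ⊆ U satisfies pos{u,x,y,z} = ℝ², then −u ∈ {x,y,z} and hence the polygon with outer normal directions u, x, y, z has two parallel edges (is a trapezoid). -/

import Mathlib

open RealInnerProductSpace

noncomputable section

abbrev V2 : Type := EuclideanSpace ℝ (Fin 2)

/-- The positive hull: all nonnegative linear combinations of elements of `M`. -/
def pos {E : Type*} [AddCommMonoid E] [Module ℝ E] (M : Set E) : Set E :=
  {x | ∃ (s : Finset E) (c : E → ℝ),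
    (↑s : Set E) ⊆ M ∧ (∀ v, 0 ≤ c v) ∧ x = ∑ v ∈ s, c v • v}

/-!
Work in the frame `u, J u` of an oriented plane, `J` the rotation by a right angle, `ω` the area
form. If some `p, q ∈ S` satisfy `ω u p > 0 > ω u q` and `ω p q > 0`, then `-u` lies strictly inside
the cone spanned by the basis `p, q`, so `{u, p, q}` already positively spans the plane. If there
are no such `p, q`, the ratios `⟪u, v⟫ / ω u v` on the two sides of the line `ℝ u` are separated by
some `t` (one-dimensional Fourier–Motzkin elimination); unless `-u ∈ S`, this puts `u` and all of
`S` in the closed half-plane `0 ≤ ⟪·, u - t • J u⟫`, which a positively spanning set cannot lie in.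
-/

open Module Submodule

section Cone

variable {E : Type*} [AddCommGroup E] [Module ℝ E]

theorem sum_smul_mem_pos {ι : Type*} [Fintype ι] {M : Set E} {f : ι → E} (hf : ∀ i, f i ∈ M)
    {c : ι → ℝ} (hc : ∀ i, 0 ≤ c i) : ∑ i, c i • f i ∈ pos M := by
  classical
  refine ⟨Finset.univ.image f, fun v => ∑ i with f i = v, c i, ?_,
    fun v => Finset.sum_nonneg fun i _ => hc i, ?_⟩
  · simpa [Set.subset_def] using hf
  · rw [← Finset.sum_fiberwise_of_maps_to (g := f) (t := Finset.univ.image f)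
      fun i _ => Finset.mem_image_of_mem f (Finset.mem_univ i)]
    refine Finset.sum_congr rfl fun v _ => ?_
    rw [Finset.sum_smul]
    exact Finset.sum_congr rfl fun i hi => by rw [(Finset.mem_filter.1 hi).2]

theorem pos_eq_univ_of_span_eq_top_of_eq_smul_add_smul {u p q : E}
    (hspan : span ℝ {p, q} = ⊤) {β γ : ℝ} (hβ : β < 0) (hγ : γ < 0)
    (hu : u = β • p + γ • q) : pos {u, p, q} = Set.univ := by
  refine Set.eq_univ_of_forall fun w => ?_
  obtain ⟨b, c, rfl⟩ := mem_span_pair.1 (hspan ▸ mem_top : w ∈ span ℝ {p, q})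
  set M := max 0 (max (b / β) (c / γ))
  have hbM : M * β ≤ b := (div_le_iff_of_neg hβ).1 ((le_max_left _ _).trans (le_max_right _ _))
  have hcM : M * γ ≤ c := (div_le_iff_of_neg hγ).1 ((le_max_right _ _).trans (le_max_right _ _))
  have hw : b • p + c • q = ∑ i, ![M, b - M * β, c - M * γ] i • ![u, p, q] i := by
    simp only [Fin.sum_univ_three, Matrix.cons_val_zero, Matrix.cons_val_one, Matrix.cons_val_two,
      Matrix.head_cons, Matrix.tail_cons, hu]
    module
  rw [hw]
  refine sum_smul_mem_pos (fun i => by fin_cases i <;> simp) fun i => ?_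
  fin_cases i <;> simp <;> linarith [le_max_left 0 (max (b / β) (c / γ))]

end Cone

theorem eq_zero_of_pos_eq_univ {E : Type*} [NormedAddCommGroup E] [InnerProductSpace ℝ E]
    {S : Set E} (hS : pos S = Set.univ) {h : E} (hh : ∀ v ∈ S, 0 ≤ ⟪v, h⟫) : h = 0 := by
  obtain ⟨s, c, hsS, hc, hsum⟩ : -h ∈ pos S := hS ▸ Set.mem_univ _
  have : 0 ≤ ⟪-h, h⟫ := by
    rw [hsum, sum_inner]
    exact Finset.sum_nonneg fun v hv => by
      rw [real_inner_smul_left]; exact mul_nonneg (hc v) (hh v (hsS hv))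
  rw [inner_neg_left, neg_nonneg] at this
  exact real_inner_self_nonpos.1 this

theorem Finset.exists_forall_mul_le {α : Type*} (s : Finset α) (a b : α → ℝ)
    (hcross : ∀ i ∈ s, ∀ j ∈ s, 0 < b i → b j < 0 → a i * b j ≤ a j * b i)
    (hzero : ∀ i ∈ s, b i = 0 → 0 ≤ a i) :
    ∃ t, ∀ i ∈ s, t * b i ≤ a i := by
  by_cases hneg : (s.filter (b · < 0)).Nonempty
  · obtain ⟨j, hj, hmax⟩ := (s.filter (b · < 0)).exists_max_image (fun j => a j / b j) hneg
    obtain ⟨hjs, hbj⟩ := Finset.mem_filter.1 hj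
    refine ⟨a j / b j, fun i hi => ?_⟩
    rcases lt_trichotomy (b i) 0 with hbi | hbi | hbi
    · have := hmax i (Finset.mem_filter.2 ⟨hi, hbi⟩)
      rwa [div_le_iff_of_neg hbi] at this
    · simpa [hbi] using hzero i hi hbi
    · rw [div_mul_eq_mul_div, div_le_iff_of_neg hbj]
      linarith [hcross i hi j hjs hbi hbj]
  · refine ⟨-∑ i ∈ s, |a i / b i|, fun i hi => ?_⟩
    have hbi : 0 ≤ b i := not_lt.1 fun h => hneg ⟨i, Finset.mem_filter.2 ⟨hi, h⟩⟩
    rcases hbi.eq_or_lt with hbi | hbi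
    · simpa [← hbi] using hzero i hi hbi.symm
    · have : -∑ i ∈ s, |a i / b i| ≤ a i / b i := by
        have := Finset.single_le_sum (fun k _ => abs_nonneg (a k / b k)) hi
        linarith [neg_abs_le (a i / b i)]
      rwa [le_div_iff₀ hbi] at this

section TwoDim

variable {E : Type*} [NormedAddCommGroup E] [InnerProductSpace ℝ E] [Fact (finrank ℝ E = 2)]

attribute [local instance] FiniteDimensional.of_fact_finrank_eq_two

section Oriented

variable (o : Orientation ℝ E (Fin 2))

local notation "ω" => o.areaForm

theorem span_pair_eq_top_of_areaForm_ne_zero {p q : E} (h : ω p q ≠ 0) :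
    span ℝ {p, q} = ⊤ := by
  have hli : LinearIndependent ℝ ![p, q] := by
    refine LinearIndependent.pair_iff.2 fun s t hst => ⟨?_, ?_⟩
    · have := congrArg (ω · q) hst
      simp only [map_add, map_smul, LinearMap.add_apply, LinearMap.smul_apply, smul_eq_mul,
        o.areaForm_apply_self, mul_zero, add_zero, map_zero, LinearMap.zero_apply] at this
      exact (mul_eq_zero.1 this).resolve_right h
    · have := congrArg (ω p) hst
      simp only [map_add, map_smul, smul_eq_mul, o.areaForm_apply_self, mul_zero, zero_add,
        map_zero] at this
      exact (mul_eq_zero.1 this).resolve_right h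
  rw [← Matrix.range_cons_cons_empty p q ![]]
  exact hli.span_eq_top_of_card_eq_finrank' (by simp [Fact.out (p := finrank ℝ E = 2)])

theorem pos_eq_univ_of_areaForm_signs {u p q : E} (hp : 0 < ω u p) (hq : ω u q < 0)
    (hpq : 0 < ω p q) : pos {u, p, q} = Set.univ := by
  have hspan := span_pair_eq_top_of_areaForm_ne_zero o hpq.ne'
  obtain ⟨β, γ, hu⟩ := mem_span_pair.1 (hspan ▸ mem_top : u ∈ span ℝ {p, q})
  have hβ : β * ω p q = ω u q := by simp [← hu, o.areaForm_apply_self]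
  have hγ : γ * ω p q = -ω u p := by simp [← hu, o.areaForm_apply_self, o.areaForm_swap q p]
  exact pos_eq_univ_of_span_eq_top_of_eq_smul_add_smul hspan (by nlinarith) (by nlinarith)
    hu.symm

theorem eq_neg_of_areaForm_eq_zero {u v : E} (hnorm : ‖v‖ = ‖u‖) (h0 : ω u v = 0)
    (hneg : ⟪u, v⟫ ≤ 0) : v = -u := by
  have hray : SameRay ℝ u (-v) := (o.nonneg_inner_and_areaForm_eq_zero_iff_sameRay u (-v)).1
    ⟨by simpa [inner_neg_right] using hneg, by simpa using h0⟩
  rw [hray.eq_of_norm_eq (by simp [hnorm]), neg_neg]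

end Oriented

theorem neg_mem_of_pos_insert_eq_univ {u : E} (hu : ‖u‖ = 1) {S : Finset E}
    (hS : ∀ v ∈ S, ‖v‖ = 1) (hpos : pos (insert u ↑S) = Set.univ)
    (hpair : ∀ p ∈ S, ∀ q ∈ S, pos {u, p, q} ≠ Set.univ) : -u ∈ S := by
  let o : Orientation ℝ E (Fin 2) := (finBasisOfFinrankEq ℝ E Fact.out).orientation
  by_contra hnot
  have hzero : ∀ v ∈ S, o.areaForm u v = 0 → 0 ≤ ⟪u, v⟫ := fun v hv h0 =>
    not_lt.1 fun hlt => hnot (eq_neg_of_areaForm_eq_zero o (by rw [hS v hv, hu]) h0 hlt.le ▸ hv)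
  have hcross : ∀ p ∈ S, ∀ q ∈ S, 0 < o.areaForm u p → o.areaForm u q < 0 →
      ⟪u, p⟫ * o.areaForm u q ≤ ⟪u, q⟫ * o.areaForm u p := by
    intro p hp q hq hup huq
    by_contra! hlt
    have hpq : 0 < o.areaForm p q := by
      have := o.inner_mul_areaForm_sub u p q
      rw [hu] at this
      nlinarith
    exact hpair p hp q hq (pos_eq_univ_of_areaForm_signs o hup huq hpq)
  obtain ⟨t, ht⟩ := S.exists_forall_mul_le (⟪u, ·⟫) (o.areaForm u) hcross hzero
  set h := u - t • o.rightAngleRotation u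
  have hinner : ∀ v, ⟪v, h⟫ = ⟪u, v⟫ - t * o.areaForm u v := fun v => by
    rw [inner_sub_right, real_inner_smul_right, o.inner_rightAngleRotation_right,
      o.areaForm_swap, real_inner_comm]
    ring
  have huh : ⟪u, h⟫ = 1 := by
    rw [hinner, o.areaForm_apply_self, real_inner_self_eq_norm_sq, hu]
    norm_num
  have hsep : ∀ v ∈ insert u (S : Set E), 0 ≤ ⟪v, h⟫ := by
    rintro v (rfl | hv)
    · exact huh.ge.trans' zero_le_one
    · rw [hinner]
      linarith [ht v hv]
  rw [eq_zero_of_pos_eq_univ hpos hsep, inner_zero_right] at huh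
  exact zero_ne_one huh

end TwoDim

theorem stmt6 (U : Set V2) (hunit : ∀ v ∈ U, ‖v‖ = 1)
    (u : V2) (hu : u ∈ U)
    (hsq : ¬ ∃ v ∈ U, ∃ w ∈ U, pos {u, v, w} = Set.univ) :
    ∀ x ∈ U, ∀ y ∈ U, ∀ z ∈ U, pos {u, x, y, z} = Set.univ →
      -u ∈ ({x, y, z} : Set V2) := by
  classical
  intro x hx y hy z hz hP
  have : Fact (finrank ℝ V2 = 2) := ⟨finrank_euclideanSpace_fin⟩
  have hxyz : ∀ v ∈ ({x, y, z} : Finset V2), v ∈ U := by simp [hx, hy, hz]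
  simpa using neg_mem_of_pos_insert_eq_univ
    (hunit u hu) (fun v hv => hunit v (hxyz v hv)) (by simpa using hP)
    fun p hp q hq h => hsq ⟨p, hxyz p hp, q, hxyz q hq, h⟩
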